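/- arXiv:1612.08666 — 2 statements merged into one kernel-verified Lean document; each statement's English description precedes it below -/
import Mathlib

section
/- Let N ≥ 2 be an integer and σ² > 0. Let y(1), ..., y(N) be independent complex Gaussian random variables where |y(n)|² is exponentially distributed with mean N + σ² and |y(t)|² is exponentially distributed with mean σ² for t ≠ n. Then the probability P_c that |y(n)|² > max_{t ≠ n} |y(t)|² equals [Σ_{r=0}^{N-2} C(N-2,r)(-1)^r (r + (N+2σ²)/(N+σ²))^{-1}] / [Σ_{r=0}^{N-2} C(N-2,r)(-1)^r (r+1)^{-1}]. -/
open Real MeasureTheory Finset Set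

/-! Expanding `(1 - e^{-u/s})^(N-2)` binomially turns the integrand into a finite alternating
combination of decaying exponentials `e^{-(1/(N+s) + (r+1)/s) u}`, each integrating to the
reciprocal of its rate. The normalising denominator is `1/(N-1)`, as
`(N-1) C(N-2, r) / (r+1) = C(N-1, r+1)` reduces it to an alternating binomial sum. -/

theorem sum_range_choose_mul_neg_one_pow_mul_inv_add_one {K : Type*} [Field K] [CharZero K]
    (n : ℕ) :
    ∑ r ∈ range (n + 1), (n.choose r : K) * (-1) ^ r * ((r : K) + 1)⁻¹ = ((n : K) + 1)⁻¹ := by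
  have hshift : ∀ r : ℕ, (n.choose r : K) * ((r : K) + 1)⁻¹ =
      ((n + 1).choose (r + 1) : K) * ((n : K) + 1)⁻¹ := by
    intro r
    have h := congrArg (Nat.cast : ℕ → K) (Nat.add_one_mul_choose_eq n r)
    push_cast at h
    field_simp
    linear_combination h
  have halt : ∑ r ∈ range (n + 1), (-1 : K) ^ r * ((n + 1).choose (r + 1) : K) = 1 := by
    have h := congrArg (Int.cast : ℤ → K)
      (Int.alternating_sum_range_choose_of_ne (n := n + 1) n.succ_ne_zero)
    rw [sum_range_succ'] at h
    push_cast at h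
    simp only [pow_succ, mul_neg_one, neg_mul, sum_neg_distrib, Nat.choose_zero_right,
      Nat.cast_one, one_mul] at h
    linear_combination -h
  calc ∑ r ∈ range (n + 1), (n.choose r : K) * (-1) ^ r * ((r : K) + 1)⁻¹
      = (∑ r ∈ range (n + 1), (-1 : K) ^ r * ((n + 1).choose (r + 1) : K)) * ((n : K) + 1)⁻¹ := by
        rw [sum_mul]
        refine sum_congr rfl fun r _ => ?_
        rw [mul_right_comm, hshift]
        ring
    _ = ((n : K) + 1)⁻¹ := by rw [halt, one_mul]

theorem integral_exp_mul_one_sub_exp_pow_mul_exp {a c : ℝ} (hc : 0 ≤ c) (hac : 0 < a + c)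
    (n : ℕ) :
    ∫ u in Ioi (0 : ℝ), exp (-a * u) * ((1 - exp (-c * u)) ^ n * exp (-c * u)) =
      ∑ r ∈ range (n + 1), (n.choose r : ℝ) * (-1) ^ r * (a + (r + 1) * c)⁻¹ := by
  have hrate : ∀ r : ℕ, 0 < a + (r + 1) * c := fun r => by nlinarith [r.cast_nonneg (α := ℝ)]
  have hexpand : ∀ u : ℝ, exp (-a * u) * ((1 - exp (-c * u)) ^ n * exp (-c * u)) =
      ∑ r ∈ range (n + 1), (n.choose r : ℝ) * (-1) ^ r * exp (-(a + (r + 1) * c) * u) := by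
    intro u
    rw [sub_eq_neg_add, add_pow, sum_mul, mul_sum]
    refine sum_congr rfl fun r _ => ?_
    rw [show -(a + (r + 1) * c) * u = -a * u + r * (-c * u) + -c * u by ring, exp_add, exp_add,
      exp_nat_mul, neg_pow, one_pow]
    ring
  simp_rw [hexpand]
  rw [integral_finsetSum _ fun r _ =>
    (integrableOn_exp_mul_Ioi (neg_lt_zero.2 (hrate r)) 0).const_mul _]
  refine sum_congr rfl fun r _ => ?_
  rw [integral_const_mul, integral_exp_mul_Ioi (neg_lt_zero.2 (hrate r)), mul_zero, exp_zero,
    div_neg, neg_div, neg_neg, one_div]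

/-- The probability of correct transmit-antenna detection: the probability that an
exponential variable with mean `N + s` (the squared magnitude of the intended coordinate)
exceeds the maximum of `N - 1` i.i.d. exponential variables with mean `s`, expressed as
the integral of the tail probability `exp (-u/(N+s))` against the density of the maximum,
equals the closed-form ratio of binomial sums. -/
theorem correct_detection_probability (N : ℕ) (hN : 2 ≤ N) (s : ℝ) (hs : 0 < s) :
    (∫ u in Set.Ioi (0 : ℝ),
        Real.exp (-u / (N + s)) *
          (((N : ℝ) - 1) / s * (1 - Real.exp (-u / s)) ^ (N - 2) * Real.exp (-u / s)))
      = (∑ r ∈ Finset.range (N - 1),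
            ((N - 2).choose r : ℝ) * (-1) ^ r * ((r : ℝ) + ((N : ℝ) + 2 * s) / ((N : ℝ) + s))⁻¹) /
        (∑ r ∈ Finset.range (N - 1), ((N - 2).choose r : ℝ) * (-1) ^ r * ((r : ℝ) + 1)⁻¹) := by
  obtain ⟨n, rfl⟩ : ∃ n, N = n + 2 := ⟨N - 2, by omega⟩
  rw [show n + 2 - 2 = n by omega, show n + 2 - 1 = n + 1 by omega,
    sum_range_choose_mul_neg_one_pow_mul_inv_add_one, div_inv_eq_mul, sum_mul]
  push_cast
  have hintegral : ∫ u in Ioi (0 : ℝ), exp (-u / ((n : ℝ) + 2 + s)) *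
        (((n : ℝ) + 2 - 1) / s * (1 - exp (-u / s)) ^ n * exp (-u / s)) =
      ((n : ℝ) + 2 - 1) / s * ∑ r ∈ range (n + 1),
        (n.choose r : ℝ) * (-1) ^ r * (((n : ℝ) + 2 + s)⁻¹ + (r + 1) * s⁻¹)⁻¹ := by
    rw [← integral_exp_mul_one_sub_exp_pow_mul_exp (inv_nonneg.2 hs.le) (by positivity),
      ← integral_const_mul]
    refine integral_congr_ae (Filter.Eventually.of_forall fun u => ?_)
    simp only [div_eq_inv_mul, neg_mul, mul_neg]
    ring
  rw [hintegral, mul_sum]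
  refine sum_congr rfl fun r _ => ?_
  field_simp
  ring
end

section
/- For every N ≥ 2 and σ² > 0, the correct-detection probability P_c defined by P_c = [Σ_{r=0}^{N-2} C(N-2,r)(-1)^r (r + (N+2σ²)/(N+σ²))^{-1}] / [Σ_{r=0}^{N-2} C(N-2,r)(-1)^r (r+1)^{-1}] satisfies 1/N ≤ P_c ≤ 1, with P_c → 1 as σ² → 0 and P_c → 1/N as σ² → ∞. -/
/-! The alternating binomial sum `∑_{r ≤ M} C(M,r) (-1)^r / (r + x)` is the
partial-fraction expansion of `M! / (x (x+1) ⋯ (x+M))`: Pascal's rule turns it into the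
difference of its values at `x` and `x + 1`, and that is how consecutive rising factorials differ.
Hence `P_c = (N-1)! / x^(N-1)` (rising factorial) at `x = (N + 2σ²) / (N + σ²)`. As `σ²` runs
from `0` to `∞`, `x` increases from `1` to `2`, where the rising factorial equals `(N-1)!` and
`N!`. -/

open Real Finset Filter

noncomputable def Pc (N : ℕ) (s : ℝ) : ℝ :=
  (∑ r ∈ Finset.range (N - 1),
      ((N - 2).choose r : ℝ) * (-1) ^ r * ((r : ℝ) + ((N : ℝ) + 2 * s) / ((N : ℝ) + s))⁻¹) /
  (∑ r ∈ Finset.range (N - 1), ((N - 2).choose r : ℝ) * (-1) ^ r * ((r : ℝ) + 1)⁻¹)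

open Polynomial Nat Topology

theorem ascPochhammer_eval_two (S : Type*) [Semiring S] (n : ℕ) :
    (ascPochhammer S n).eval 2 = ((n + 1)! : S) := by
  have := factorial_mul_ascPochhammer S 1 n
  rwa [factorial_one, cast_one, one_mul, one_add_one_eq_two, add_comm] at this

section Field

variable {K : Type*} [Field K]

theorem sum_range_succ_choose_mul_neg_one_pow_mul_inv (M : ℕ) (x : K) :
    ∑ r ∈ range (M + 2), ((M + 1).choose r : K) * (-1) ^ r * (r + x)⁻¹ =
      ∑ r ∈ range (M + 1), (M.choose r : K) * (-1) ^ r * (r + x)⁻¹ -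
        ∑ r ∈ range (M + 1), (M.choose r : K) * (-1) ^ r * (r + (x + 1))⁻¹ := by
  have := sum_choose_succ_mul (fun r _ => (-1 : K) ^ r * (r + x)⁻¹) M
  simp only [← mul_assoc] at this
  rw [this, sub_eq_add_neg, ← sum_neg_distrib]
  congr 1
  refine sum_congr rfl fun r _ => ?_
  push_cast
  ring

theorem sum_range_choose_mul_neg_one_pow_mul_inv (M : ℕ) {x : K}
    (hx : (ascPochhammer K (M + 1)).eval x ≠ 0) :
    ∑ r ∈ range (M + 1), (M.choose r : K) * (-1) ^ r * (r + x)⁻¹ =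
      M ! / (ascPochhammer K (M + 1)).eval x := by
  induction M generalizing x with
  | zero => simp
  | succ M ih =>
    have hleft := ascPochhammer_succ_eval (M + 1) x
    have hright :
        (ascPochhammer K (M + 2)).eval x = x * (ascPochhammer K (M + 1)).eval (x + 1) := by
      rw [ascPochhammer_succ_left, eval_mul, eval_X, eval_comp, eval_add, eval_X, eval_one]
    have hrel : (ascPochhammer K (M + 1)).eval x * (x + (M + 1)) =
        x * (ascPochhammer K (M + 1)).eval (x + 1) := by
      rw [← hright]; exact_mod_cast hleft.symm
    rw [hleft] at hx
    have hx₁ : (ascPochhammer K (M + 1)).eval x ≠ 0 := left_ne_zero_of_mul hx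
    have hx₂ : x * (ascPochhammer K (M + 1)).eval (x + 1) ≠ 0 := by
      rw [← hrel]; exact_mod_cast hx
    rw [sum_range_succ_choose_mul_neg_one_pow_mul_inv, ih hx₁, ih (right_ne_zero_of_mul hx₂),
      div_sub_div _ _ hx₁ (right_ne_zero_of_mul hx₂), hright,
      div_eq_div_iff (mul_ne_zero hx₁ (right_ne_zero_of_mul hx₂)) hx₂, factorial_succ]
    push_cast
    linear_combination -(M ! * (ascPochhammer K (M + 1)).eval (x + 1)) * hrel

theorem factorial_div_ascPochhammer_eval_two [CharZero K] (n : ℕ) :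
    (n ! : K) / (ascPochhammer K n).eval 2 = ((n : K) + 1)⁻¹ := by
  rw [ascPochhammer_eval_two, factorial_succ, cast_mul,
    div_mul_cancel_right₀ (cast_ne_zero.2 (factorial_ne_zero n))]
  push_cast
  ring

end Field

theorem monotoneOn_ascPochhammer_eval {S : Type*} [Semiring S] [PartialOrder S]
    [IsStrictOrderedRing S] (n : ℕ) :
    MonotoneOn (ascPochhammer S n).eval (Set.Ici 0) := by
  induction n with
  | zero => simp [monotoneOn_const]
  | succ n ih =>
    intro a ha b hb hab
    have h₀ : 0 ≤ (ascPochhammer S n).eval 0 := by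
      rw [ascPochhammer_eval_zero]; split_ifs <;> simp
    have hb₀ : 0 ≤ (ascPochhammer S n).eval b := h₀.trans (ih Set.self_mem_Ici hb hb)
    simp only [ascPochhammer_succ_eval]
    exact mul_le_mul (ih ha hb hab) (by gcongr) (add_nonneg ha (Nat.cast_nonneg n)) hb₀

section OrderedField

variable {K : Type*} [Field K] [LinearOrder K] [IsStrictOrderedRing K]

theorem factorial_div_ascPochhammer_eval_le_one (n : ℕ) {x : K} (hx : 1 ≤ x) :
    (n ! : K) / (ascPochhammer K n).eval x ≤ 1 := by
  rw [div_le_one (ascPochhammer_pos n x (one_pos.trans_le hx)), ← ascPochhammer_eval_one]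
  exact monotoneOn_ascPochhammer_eval n (Set.mem_Ici.2 zero_le_one)
    (Set.mem_Ici.2 (zero_le_one.trans hx)) hx

theorem inv_succ_le_factorial_div_ascPochhammer_eval (n : ℕ) {x : K} (hx₀ : 0 < x)
    (hx : x ≤ 2) :
    ((n : K) + 1)⁻¹ ≤ (n ! : K) / (ascPochhammer K n).eval x := by
  have h₂ : (ascPochhammer K n).eval x ≤ (n + 1)! :=
    ascPochhammer_eval_two K n ▸ monotoneOn_ascPochhammer_eval n hx₀.le zero_le_two hx
  rw [le_div_iff₀ (ascPochhammer_pos n x hx₀), inv_mul_le_iff₀ (by positivity)]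
  calc (ascPochhammer K n).eval x ≤ (n + 1)! := h₂
    _ = (n + 1) * n ! := by push_cast [factorial_succ]; ring

end OrderedField

noncomputable def pcShift (N : ℕ) (s : ℝ) : ℝ := (N + 2 * s) / (N + s)

theorem one_le_pcShift (N : ℕ) {s : ℝ} (hs : 0 < s) : 1 ≤ pcShift N s := by
  rw [pcShift, le_div_iff₀ (by positivity)]
  linarith

theorem pcShift_le_two (N : ℕ) {s : ℝ} (hs : 0 < s) : pcShift N s ≤ 2 := by
  rw [pcShift, div_le_iff₀ (by positivity)]
  linarith [(N.cast_nonneg : (0 : ℝ) ≤ N)]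

theorem tendsto_pcShift_nhds_zero {N : ℕ} (hN : N ≠ 0) :
    Tendsto (pcShift N) (𝓝 0) (𝓝 1) := by
  have hN' : (N : ℝ) + 0 ≠ 0 := by simpa using hN
  have h : ContinuousAt (pcShift N) 0 := ContinuousAt.div (by fun_prop) (by fun_prop) hN'
  simpa [pcShift, hN] using h.tendsto

theorem tendsto_pcShift_atTop (N : ℕ) : Tendsto (pcShift N) atTop (𝓝 2) := by
  have h : Tendsto (fun s : ℝ => 2 - N / (N + s)) atTop (𝓝 (2 - 0)) :=
    tendsto_const_nhds.sub
      (tendsto_const_nhds.div_atTop (tendsto_atTop_add_const_left _ _ tendsto_id))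
  rw [sub_zero] at h
  refine h.congr' ?_
  filter_upwards [eventually_gt_atTop 0] with s hs
  have : (N : ℝ) + s ≠ 0 := by positivity
  rw [pcShift]
  field_simp
  ring

theorem Pc_succ_eqOn {n : ℕ} (hn : 1 ≤ n) :
    Set.EqOn (Pc (n + 1)) (fun s => n ! / (ascPochhammer ℝ n).eval (pcShift (n + 1) s))
      (Set.Ioi 0) := by
  intro s hs
  obtain ⟨M, rfl⟩ : ∃ M, n = M + 1 := ⟨n - 1, by omega⟩
  have hx := ascPochhammer_pos (M + 1) _ (one_pos.trans_le (one_le_pcShift (M + 1 + 1) hs))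
  simp only [Pc, pcShift, Nat.add_sub_cancel, show M + 1 + 1 - 2 = M by omega] at hx ⊢
  rw [sum_range_choose_mul_neg_one_pow_mul_inv M hx.ne',
    sum_range_choose_mul_neg_one_pow_mul_inv M (ascPochhammer_pos _ _ one_pos).ne',
    ascPochhammer_eval_one]
  field_simp

theorem Pc_bounds_and_limits (N : ℕ) (hN : 2 ≤ N) :
    (∀ s : ℝ, 0 < s → 1 / (N : ℝ) ≤ Pc N s ∧ Pc N s ≤ 1) ∧
    Tendsto (Pc N) (nhdsWithin 0 (Set.Ioi 0)) (nhds 1) ∧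
    Tendsto (Pc N) atTop (nhds (1 / (N : ℝ))) := by
  obtain ⟨n, rfl⟩ : ∃ n, N = n + 1 := ⟨N - 1, by omega⟩
  have hPc := Pc_succ_eqOn (show 1 ≤ n by omega)
  have hF : ∀ {a : ℝ}, 0 < a → ContinuousAt (fun x => n ! / (ascPochhammer ℝ n).eval x) a :=
    fun ha => continuousAt_const.div (Polynomial.continuousAt _) (ascPochhammer_pos n _ ha).ne'
  push_cast
  rw [one_div]
  refine ⟨fun s hs => ?_, ?_, ?_⟩
  · rw [hPc hs]
    have hx := one_le_pcShift (n + 1) hs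
    exact ⟨inv_succ_le_factorial_div_ascPochhammer_eval n (one_pos.trans_le hx)
      (pcShift_le_two _ hs), factorial_div_ascPochhammer_eval_le_one n hx⟩
  · have h := (hF one_pos).tendsto.comp
      ((tendsto_pcShift_nhds_zero n.succ_ne_zero).mono_left (nhdsWithin_le_nhds (s := Set.Ioi 0)))
    rw [Function.comp_def, ascPochhammer_eval_one, div_self (by positivity)] at h
    exact h.congr' (hPc.eventuallyEq_of_mem self_mem_nhdsWithin).symm
  · have h := (hF two_pos).tendsto.comp (tendsto_pcShift_atTop (n + 1))
    rw [Function.comp_def, factorial_div_ascPochhammer_eval_two] at h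
    exact h.congr' (hPc.eventuallyEq_of_mem (Ioi_mem_atTop 0)).symm
end
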